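/- arXiv:2307.00805 — 5 statements merged into one kernel-verified Lean document; each statement's English description precedes it below -/
import Mathlib

section
/- Let n ≥ 1 and let T ∈ ℂ^{n×n} be a Hermitian Toeplitz matrix, i.e., T* = T and T_{jk} depends only on k − j; let t₁ ∈ ℝ denote its (common) diagonal entry. Then there exist vectors v₁, v₂ ∈ ℂ^n such that T = t₁·I + Σ_{j=0}^{n−1} Δ^j (v₁ v₁* − v₂ v₂*) (Δᵀ)^j, where Δ ∈ ℂ^{n×n} is the lower shift matrix. -/
open Matrix

/-- The lower shift matrix `Δ`, with ones just below the diagonal. -/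
def shiftMatrix (R : Type*) [Zero R] [One R] (n : ℕ) : Matrix (Fin n) (Fin n) R :=
  Matrix.of fun j k => if (j : ℕ) = (k : ℕ) + 1 then 1 else 0

lemma shiftMatrix_pow_apply (n j : ℕ) (p q : Fin n) :
    ((shiftMatrix ℂ n) ^ j) p q = if (p : ℕ) = (q : ℕ) + j then 1 else 0 := by
  induction j generalizing p q with
  | zero => simp [Matrix.one_apply, Fin.ext_iff]
  | succ j ih =>
    rw [pow_succ, Matrix.mul_apply]
    by_cases h : (p : ℕ) = (q : ℕ) + (j + 1)
    · have hq : (q : ℕ) + 1 < n := by have := p.isLt; omega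
      rw [Finset.sum_eq_single (⟨(q : ℕ) + 1, hq⟩ : Fin n)]
      · rw [ih]
        simp only [shiftMatrix, Matrix.of_apply]
        rw [if_pos (by omega), if_pos (by simp), if_pos (by omega), mul_one]
      · intro r _ hr
        have : ((r : ℕ) = (q : ℕ) + 1) → False := by
          intro hrq; exact hr (Fin.ext hrq)
        simp only [shiftMatrix, Matrix.of_apply]
        rw [if_neg this, mul_zero]
      · intro h'; exact absurd (Finset.mem_univ _) h'
    · rw [if_neg h]
      apply Finset.sum_eq_zero
      intro r _
      rw [ih]
      simp only [shiftMatrix, Matrix.of_apply]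
      by_cases hr : (r : ℕ) = (q : ℕ) + 1
      · rw [if_neg (by omega), zero_mul]
      · rw [if_neg hr, mul_zero]

lemma shift_triple_apply (n j : ℕ) (M : Matrix (Fin n) (Fin n) ℂ) (p q : Fin n) :
    ((shiftMatrix ℂ n) ^ j * M * ((shiftMatrix ℂ n)ᵀ) ^ j) p q =
      if j ≤ (p : ℕ) ∧ j ≤ (q : ℕ) then
        M ⟨(p : ℕ) - j, lt_of_le_of_lt (Nat.sub_le _ _) p.isLt⟩
          ⟨(q : ℕ) - j, lt_of_le_of_lt (Nat.sub_le _ _) q.isLt⟩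
      else 0 := by
  have hT : ∀ s : Fin n, (((shiftMatrix ℂ n)ᵀ) ^ j) s q
      = if (q : ℕ) = (s : ℕ) + j then 1 else 0 := by
    intro s
    rw [← Matrix.transpose_pow, Matrix.transpose_apply, shiftMatrix_pow_apply]
  have hInner : ∀ s : Fin n, ((shiftMatrix ℂ n) ^ j * M) p s
      = if hj : j ≤ (p : ℕ) then
          M ⟨(p : ℕ) - j, lt_of_le_of_lt (Nat.sub_le _ _) p.isLt⟩ s else 0 := by
    intro s
    rw [Matrix.mul_apply]
    by_cases hj : j ≤ (p : ℕ)
    · rw [dif_pos hj]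
      rw [Finset.sum_eq_single (⟨(p : ℕ) - j, lt_of_le_of_lt (Nat.sub_le _ _) p.isLt⟩ : Fin n)]
      · rw [shiftMatrix_pow_apply, if_pos (by simp; omega), one_mul]
      · intro r _ hr
        rw [shiftMatrix_pow_apply, if_neg (fun hc => hr (Fin.ext (by simp; omega))), zero_mul]
      · intro h'; exact absurd (Finset.mem_univ _) h'
    · rw [dif_neg hj]
      apply Finset.sum_eq_zero
      intro r _
      rw [shiftMatrix_pow_apply, if_neg (by omega), zero_mul]
  rw [Matrix.mul_apply]
  by_cases h : j ≤ (p : ℕ) ∧ j ≤ (q : ℕ)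
  · rw [if_pos h]
    rw [Finset.sum_eq_single (⟨(q : ℕ) - j, lt_of_le_of_lt (Nat.sub_le _ _) q.isLt⟩ : Fin n)]
    · rw [hT, hInner, dif_pos h.1, if_pos (by simp; omega), mul_one]
    · intro s _ hs
      rw [hT, if_neg (fun hc => hs (Fin.ext (by simp; omega))), mul_zero]
    · intro h'; exact absurd (Finset.mem_univ _) h'
  · rw [if_neg h]
    apply Finset.sum_eq_zero
    intro s _
    by_cases hj : j ≤ (q : ℕ)
    · have hp : ¬ j ≤ (p : ℕ) := fun hc => h ⟨hc, hj⟩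
      rw [hInner, dif_neg hp, zero_mul]
    · rw [hT, if_neg (by omega), mul_zero]

/-- Symmetric factorization of a Hermitian Toeplitz matrix:
`T = t₁ I + Σ_{j=0}^{n-1} Δ^j (v₁ v₁* − v₂ v₂*) (Δᵀ)^j`. -/
theorem hermitian_toeplitz_symmetric_factorization (n : ℕ) (hn : 1 ≤ n)
    (T : Matrix (Fin n) (Fin n) ℂ) (hHerm : Tᴴ = T)
    (hToep : ∀ j k j' k' : Fin n,
      ((k : ℤ) - (j : ℤ) = (k' : ℤ) - (j' : ℤ)) → T j k = T j' k')
    (t₁ : ℝ) (ht : ∀ j : Fin n, T j j = (t₁ : ℂ)) :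
    ∃ v₁ v₂ : Fin n → ℂ,
      T = (t₁ : ℂ) • (1 : Matrix (Fin n) (Fin n) ℂ) +
        ∑ j ∈ Finset.range n,
          (shiftMatrix ℂ n) ^ j *
            (Matrix.vecMulVec v₁ (star v₁) - Matrix.vecMulVec v₂ (star v₂)) *
            ((shiftMatrix ℂ n)ᵀ) ^ j := by
  set z : Fin n := ⟨0, hn⟩ with hz
  set w : Fin n → ℂ := fun p => if (p : ℕ) = 0 then 0 else T p z with hw
  set e : Fin n → ℂ := fun p => if (p : ℕ) = 0 then 1 else 0 with he
  set c : ℂ := ((Real.sqrt 2 : ℝ) : ℂ) with hc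
  have hc0 : c ≠ 0 := by
    simp [hc, Complex.ofReal_ne_zero, Real.sqrt_ne_zero']
  have hcc : c * star c = 2 := by
    rw [hc, RCLike.star_def, Complex.conj_ofReal, ← Complex.ofReal_mul,
      Real.mul_self_sqrt (by norm_num)]
    norm_num
  have hse : ∀ q : Fin n, star (e q) = e q := by
    intro q; simp only [he, apply_ite (star : ℂ → ℂ), star_one, star_zero]
  set v₁ : Fin n → ℂ := fun p => (e p + w p) / c with hv₁
  set v₂ : Fin n → ℂ := fun p => (e p - w p) / c with hv₂
  have hE : ∀ p q : Fin n,
      (Matrix.vecMulVec v₁ (star v₁) - Matrix.vecMulVec v₂ (star v₂)) p q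
        = e p * star (w q) + w p * e q := by
    intro p q
    simp only [Matrix.sub_apply, Matrix.vecMulVec_apply, Pi.star_apply, hv₁, hv₂,
      star_div₀, star_add, star_sub, hse]
    rw [div_mul_div_comm, div_mul_div_comm, ← sub_div, hcc]
    ring
  refine ⟨v₁, v₂, ?_⟩
  ext p q
  rw [Matrix.add_apply, Matrix.smul_apply, Matrix.one_apply, Matrix.sum_apply]
  have hsum : ∀ j ∈ Finset.range n,
      ((shiftMatrix ℂ n) ^ j *
        (Matrix.vecMulVec v₁ (star v₁) - Matrix.vecMulVec v₂ (star v₂)) *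
        ((shiftMatrix ℂ n)ᵀ) ^ j) p q
      = if j ≤ (p : ℕ) ∧ j ≤ (q : ℕ) then
          e ⟨(p : ℕ) - j, lt_of_le_of_lt (Nat.sub_le _ _) p.isLt⟩ *
            star (w ⟨(q : ℕ) - j, lt_of_le_of_lt (Nat.sub_le _ _) q.isLt⟩) +
          w ⟨(p : ℕ) - j, lt_of_le_of_lt (Nat.sub_le _ _) p.isLt⟩ *
            e ⟨(q : ℕ) - j, lt_of_le_of_lt (Nat.sub_le _ _) q.isLt⟩
        else 0 := by
    intro j _
    rw [shift_triple_apply, hE]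
  rw [Finset.sum_congr rfl hsum]
  rcases lt_trichotomy (p : ℕ) (q : ℕ) with hpq | hpq | hpq
  · -- p < q
    rw [if_neg (fun hc => by simp [hc] at hpq), smul_zero, zero_add]
    rw [Finset.sum_eq_single (p : ℕ)]
    · rw [if_pos ⟨le_refl _, le_of_lt hpq⟩]
      have he1 : e ⟨(p : ℕ) - p, lt_of_le_of_lt (Nat.sub_le _ _) p.isLt⟩ = 1 := by
        simp only [he]; rw [if_pos (by omega)]
      have he2 : e ⟨(q : ℕ) - p, lt_of_le_of_lt (Nat.sub_le _ _) q.isLt⟩ = 0 := by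
        simp only [he]; rw [if_neg (by omega)]
      have hw1 : w ⟨(p : ℕ) - p, lt_of_le_of_lt (Nat.sub_le _ _) p.isLt⟩ = 0 := by
        simp only [hw]; rw [if_pos (by omega)]
      have hw2 : w ⟨(q : ℕ) - p, lt_of_le_of_lt (Nat.sub_le _ _) q.isLt⟩
          = T ⟨(q : ℕ) - p, lt_of_le_of_lt (Nat.sub_le _ _) q.isLt⟩ z := by
        simp only [hw]; rw [if_neg (by omega)]
      rw [he1, he2, hw1, hw2, one_mul, mul_zero, add_zero]
      have hherm : star (T ⟨(q : ℕ) - p, lt_of_le_of_lt (Nat.sub_le _ _) q.isLt⟩ z)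
          = T z ⟨(q : ℕ) - p, lt_of_le_of_lt (Nat.sub_le _ _) q.isLt⟩ := by
        rw [← Matrix.conjTranspose_apply, hHerm]
      rw [hherm]
      exact (hToep z ⟨(q : ℕ) - p, lt_of_le_of_lt (Nat.sub_le _ _) q.isLt⟩ p q
        (by simp [hz]; omega)).symm
    · intro j hj hjp
      by_cases hjle : j ≤ (p : ℕ) ∧ j ≤ (q : ℕ)
      · rw [if_pos hjle]
        have hj1 : e ⟨(p : ℕ) - j, lt_of_le_of_lt (Nat.sub_le _ _) p.isLt⟩ = 0 := by
          simp only [he]; rw [if_neg (by omega)]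
        have hj2 : e ⟨(q : ℕ) - j, lt_of_le_of_lt (Nat.sub_le _ _) q.isLt⟩ = 0 := by
          simp only [he]; rw [if_neg (by omega)]
        rw [hj1, hj2, zero_mul, mul_zero, add_zero]
      · rw [if_neg hjle]
    · intro hnp; exact absurd (Finset.mem_range.mpr p.isLt) hnp
  · -- p = q
    rw [if_pos (Fin.ext hpq), smul_eq_mul, mul_one]
    rw [Finset.sum_eq_zero, add_zero]
    · have hpq' : p = q := Fin.ext hpq
      subst hpq'
      exact ht p
    · intro j _
      by_cases hjle : j ≤ (p : ℕ) ∧ j ≤ (q : ℕ)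
      · rw [if_pos hjle]
        by_cases h0 : (p : ℕ) - j = 0
        · have hq0 : (q : ℕ) - j = 0 := by omega
          have hwp : w ⟨(p : ℕ) - j, lt_of_le_of_lt (Nat.sub_le _ _) p.isLt⟩ = 0 := by
            simp only [hw]; rw [if_pos h0]
          have hwq : w ⟨(q : ℕ) - j, lt_of_le_of_lt (Nat.sub_le _ _) q.isLt⟩ = 0 := by
            simp only [hw]; rw [if_pos hq0]
          rw [hwp, hwq, star_zero, mul_zero, zero_mul, add_zero]
        · have hq0 : ¬ (q : ℕ) - j = 0 := by omega
          have hep : e ⟨(p : ℕ) - j, lt_of_le_of_lt (Nat.sub_le _ _) p.isLt⟩ = 0 := by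
            simp only [he]; rw [if_neg h0]
          have heq : e ⟨(q : ℕ) - j, lt_of_le_of_lt (Nat.sub_le _ _) q.isLt⟩ = 0 := by
            simp only [he]; rw [if_neg hq0]
          rw [hep, heq, zero_mul, mul_zero, add_zero]
      · rw [if_neg hjle]
  · -- q < p
    rw [if_neg (fun hc => by simp [hc] at hpq), smul_zero, zero_add]
    rw [Finset.sum_eq_single (q : ℕ)]
    · rw [if_pos ⟨le_of_lt hpq, le_refl _⟩]
      have he1 : e ⟨(q : ℕ) - q, lt_of_le_of_lt (Nat.sub_le _ _) q.isLt⟩ = 1 := by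
        simp only [he]; rw [if_pos (by omega)]
      have he2 : e ⟨(p : ℕ) - q, lt_of_le_of_lt (Nat.sub_le _ _) p.isLt⟩ = 0 := by
        simp only [he]; rw [if_neg (by omega)]
      have hw1 : w ⟨(q : ℕ) - q, lt_of_le_of_lt (Nat.sub_le _ _) q.isLt⟩ = 0 := by
        simp only [hw]; rw [if_pos (by omega)]
      have hw2 : w ⟨(p : ℕ) - q, lt_of_le_of_lt (Nat.sub_le _ _) p.isLt⟩
          = T ⟨(p : ℕ) - q, lt_of_le_of_lt (Nat.sub_le _ _) p.isLt⟩ z := by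
        simp only [hw]; rw [if_neg (by omega)]
      rw [he1, he2, hw1, hw2, zero_mul, zero_add, mul_one]
      exact (hToep ⟨(p : ℕ) - q, lt_of_le_of_lt (Nat.sub_le _ _) p.isLt⟩ z p q
        (by simp [hz]; omega)).symm
    · intro j hj hjq
      by_cases hjle : j ≤ (p : ℕ) ∧ j ≤ (q : ℕ)
      · rw [if_pos hjle]
        have hj1 : e ⟨(p : ℕ) - j, lt_of_le_of_lt (Nat.sub_le _ _) p.isLt⟩ = 0 := by
          simp only [he]; rw [if_neg (by omega)]
        have hj2 : e ⟨(q : ℕ) - j, lt_of_le_of_lt (Nat.sub_le _ _) q.isLt⟩ = 0 := by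
          simp only [he]; rw [if_neg (by omega)]
        rw [hj1, hj2, zero_mul, mul_zero, add_zero]
      · rw [if_neg hjle]
    · intro hnq; exact absurd (Finset.mem_range.mpr q.isLt) hnq
end

section
/- Let n ≥ 1 and let H ∈ ℝ^{n×n} be an invertible Hankel matrix (H_{jk} = h_{j+k−1} for some h ∈ ℝ^{2n−1}). Then there exist a natural number m with m ≤ 8·n·(⌈log₂ n⌉ + 2) and matrices B, C ∈ ℂ^{n×m} such that H^{−1} = B B* − C C*, where B* denotes the conjugate transpose of B. -/
open Matrix

/-- Any Hermitian complex matrix can be written as `B Bᴴ - C Cᴴ` with square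
`B`, `C`, via the spectral theorem. -/
theorem hermitian_diff_factorization {k : ℕ} (A : Matrix (Fin k) (Fin k) ℂ)
    (hA : A.IsHermitian) :
    ∃ B C : Matrix (Fin k) (Fin k) ℂ, A = B * Bᴴ - C * Cᴴ := by
  classical
  set U : Matrix (Fin k) (Fin k) ℂ := (hA.eigenvectorUnitary : Matrix (Fin k) (Fin k) ℂ)
  set lam : Fin k → ℝ := hA.eigenvalues
  set dp : Fin k → ℝ := fun i => Real.sqrt (max (lam i) 0)
  set dm : Fin k → ℝ := fun i => Real.sqrt (max (-lam i) 0)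
  refine ⟨U * diagonal (fun i => (dp i : ℂ)), U * diagonal (fun i => (dm i : ℂ)), ?_⟩
  have hdiagH : ∀ d : Fin k → ℝ,
      (diagonal (fun i => (d i : ℂ)))ᴴ = diagonal (fun i => (d i : ℂ)) := by
    intro d
    ext i j
    rw [conjTranspose_apply]
    by_cases hij : i = j
    · subst hij; simp [Complex.conj_ofReal]
    · rw [diagonal_apply_ne _ hij, diagonal_apply_ne _ (Ne.symm hij), star_zero]
  have key : ∀ d : Fin k → ℝ,
      (U * diagonal (fun i => (d i : ℂ))) * (U * diagonal (fun i => (d i : ℂ)))ᴴ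
        = U * diagonal (fun i => ((d i : ℂ)) * (d i : ℂ)) * Uᴴ := by
    intro d
    rw [conjTranspose_mul, hdiagH d, Matrix.mul_assoc, Matrix.mul_assoc]
    congr 1
    rw [← Matrix.mul_assoc, diagonal_mul_diagonal]
  rw [key dp, key dm, ← Matrix.sub_mul, ← Matrix.mul_sub]
  have hdd : diagonal (fun i => ((dp i : ℂ)) * (dp i : ℂ))
      - diagonal (fun i => ((dm i : ℂ)) * (dm i : ℂ))
      = diagonal (fun i => ((lam i : ℝ) : ℂ)) := by
    rw [diagonal_sub]
    have hfun : (fun i => ((dp i : ℂ)) * (dp i : ℂ) - ((dm i : ℂ)) * (dm i : ℂ))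
        = fun i => ((lam i : ℝ) : ℂ) := by
      funext i
      have h1 : (dp i) * (dp i) = max (lam i) 0 := Real.mul_self_sqrt (le_max_right _ _)
      have h2 : (dm i) * (dm i) = max (-lam i) 0 := Real.mul_self_sqrt (le_max_right _ _)
      have hre : (dp i) * (dp i) - (dm i) * (dm i) = lam i := by
        rw [h1, h2]
        rcases le_total (lam i) 0 with hl | hl
        · simp [max_eq_right hl, max_eq_left (neg_nonneg.mpr hl)]
        · simp [max_eq_left hl, max_eq_right (neg_nonpos.mpr hl)]
      show ((dp i : ℂ)) * (dp i : ℂ) - ((dm i : ℂ)) * (dm i : ℂ) = ((lam i : ℝ) : ℂ)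
      push_cast [← hre]
      ring
    rw [hfun]
  rw [hdd]
  have hst := hA.spectral_theorem
  rw [hst]
  rfl

/-- Symmetric factorization `H⁻¹ = B B* - C C*` of the inverse of a real
invertible Hankel matrix, with `O(n log n)` columns. -/
theorem hankel_inverse_symmetric_factorization (n : ℕ) (hn : 1 ≤ n)
    (H : Matrix (Fin n) (Fin n) ℝ)
    (h : ℕ → ℝ) (hH : ∀ j k : Fin n, H j k = h ((j : ℕ) + (k : ℕ)))
    (hinv : IsUnit H) :
    ∃ m : ℕ, m ≤ 8 * n * (Nat.clog 2 n + 2) ∧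
      ∃ B C : Matrix (Fin n) (Fin m) ℂ,
        (H⁻¹).map (fun x => (x : ℂ)) = B * Bᴴ - C * Cᴴ := by
  classical
  refine ⟨n, ?_, ?_⟩
  · calc n = 1 * n * 1 := by ring
    _ ≤ 8 * n * (Nat.clog 2 n + 2) := by
        apply Nat.mul_le_mul
        · exact Nat.mul_le_mul_right n (by norm_num)
        · omega
  · have hsymm : Hᵀ = H := by
      ext i j
      simp [transpose_apply, hH, Nat.add_comm]
    have hinvsymm : (H⁻¹)ᵀ = H⁻¹ := by
      rw [Matrix.transpose_nonsing_inv, hsymm]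
    set A : Matrix (Fin n) (Fin n) ℂ := (H⁻¹).map (fun x => (x : ℂ)) with hAdef
    have hA : A.IsHermitian := by
      unfold Matrix.IsHermitian
      ext i j
      have hsym' : H⁻¹ j i = H⁻¹ i j := by
        have := congrFun (congrFun hinvsymm j) i
        simpa [transpose_apply] using this.symm
      simp [hAdef, conjTranspose_apply, Complex.conj_ofReal, hsym']
    exact hermitian_diff_factorization A hA
end

section
/- Let F be a field, n ≥ 1, and let H ∈ F^{n×n} be an invertible Hankel matrix (H_{jk} = h_{j+k−1} for some h ∈ F^{2n−1}). Let Δ be the lower shift matrix. Then rank(Δ H^{−1} − H^{−1} Δᵀ) ≤ 2 and rank(Δᵀ H^{−1} − H^{−1} Δ) ≤ 2. -/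
open Matrix

/-- A matrix supported on one row and one column has rank at most two. -/
lemma rank_le_two_of_support {F : Type*} [Field F] {n : ℕ} (M : Matrix (Fin n) (Fin n) F)
    (j0 k0 : Fin n) (hM : ∀ j k, j ≠ j0 → k ≠ k0 → M j k = 0) : M.rank ≤ 2 := by
  classical
  set C : Matrix (Fin n) (Fin 2) F :=
    Matrix.of fun j i => if i = 0 then (if j = j0 then 1 else 0)
      else (if j = j0 then 0 else M j k0) with hC
  set R : Matrix (Fin 2) (Fin n) F :=
    Matrix.of fun i k => if i = 0 then M j0 k else (if k = k0 then 1 else 0) with hR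
  have hMCR : M = C * R := by
    ext j k
    rw [Matrix.mul_apply, Fin.sum_univ_two]
    by_cases hj : j = j0 <;> by_cases hk : k = k0 <;>
      simp [hC, hR, hj, hk, hM j k]
  calc M.rank = (C * R).rank := by rw [hMCR]
    _ ≤ C.rank := Matrix.rank_mul_le_left C R
    _ ≤ Fintype.card (Fin 2) := Matrix.rank_le_card_width C
    _ = 2 := by simp

/-- The inverse of an invertible Hankel matrix has Sylvester-type displacement
rank at most two with respect to `(Δ, Δᵀ)` and `(Δᵀ, Δ)`. -/
theorem hankel_inverse_displacement_rank (F : Type*) [Field F] (n : ℕ) (hn : 1 ≤ n)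
    (H : Matrix (Fin n) (Fin n) F)
    (h : ℕ → F) (hH : ∀ j k : Fin n, H j k = h ((j : ℕ) + (k : ℕ)))
    (hinv : IsUnit H) :
    (shiftMatrix F n * H⁻¹ - H⁻¹ * (shiftMatrix F n)ᵀ).rank ≤ 2 ∧
    ((shiftMatrix F n)ᵀ * H⁻¹ - H⁻¹ * shiftMatrix F n).rank ≤ 2 := by
  classical
  have hdet : IsUnit H.det := (Matrix.isUnit_iff_isUnit_det H).mp hinv
  have h1 : H⁻¹ * H = 1 := Matrix.nonsing_inv_mul H hdet
  have h2 : H * H⁻¹ = 1 := Matrix.mul_nonsing_inv H hdet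
  set Δ := shiftMatrix F n with hΔ
  have hΔa : ∀ j k : Fin n, Δ j k = if (j : ℕ) = (k : ℕ) + 1 then 1 else 0 := fun j k => rfl
  have hΔTa : ∀ j k : Fin n, Δᵀ j k = if (k : ℕ) = (j : ℕ) + 1 then 1 else 0 := fun j k => rfl
  -- shift identities
  have hΔH : ∀ j k : Fin n, (Δᵀ * H) j k = if hj : (j : ℕ) + 1 < n then H ⟨j+1, hj⟩ k else 0 := by
    intro j k
    rw [Matrix.mul_apply]
    split_ifs with hj
    · rw [Finset.sum_eq_single (⟨(j : ℕ) + 1, hj⟩ : Fin n)]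
      · simp [Matrix.transpose_apply, hΔa]
      · intro b _ hb
        have : (b : ℕ) ≠ (j : ℕ) + 1 := fun hc => hb (Fin.ext hc)
        simp [Matrix.transpose_apply, hΔa, this]
      · simp
    · apply Finset.sum_eq_zero
      intro b _
      have : (b : ℕ) ≠ (j : ℕ) + 1 := fun hc => hj (hc ▸ b.isLt)
      simp [Matrix.transpose_apply, hΔa, this]
  have hHΔ : ∀ j k : Fin n, (H * Δ) j k = if hk : (k : ℕ) + 1 < n then H j ⟨k+1, hk⟩ else 0 := by
    intro j k
    rw [Matrix.mul_apply]
    split_ifs with hk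
    · rw [Finset.sum_eq_single (⟨(k : ℕ) + 1, hk⟩ : Fin n)]
      · simp [hΔa]
      · intro b _ hb
        have : (b : ℕ) ≠ (k : ℕ) + 1 := fun hc => hb (Fin.ext hc)
        simp [hΔa, this]
      · simp
    · apply Finset.sum_eq_zero
      intro b _
      have : (b : ℕ) ≠ (k : ℕ) + 1 := fun hc => hk (hc ▸ b.isLt)
      simp [hΔa, this]
  have hΔHT : ∀ j k : Fin n, (Δ * H) j k =
      if hj : 1 ≤ (j : ℕ) then H ⟨(j : ℕ) - 1, by omega⟩ k else 0 := by
    intro j k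
    rw [Matrix.mul_apply]
    split_ifs with hj
    · rw [Finset.sum_eq_single (⟨(j : ℕ) - 1, by omega⟩ : Fin n)]
      · rw [hΔa]; simp; omega
      · intro b _ hb
        have : (j : ℕ) ≠ (b : ℕ) + 1 := by
          intro hc
          apply hb; apply Fin.ext; simp; omega
        simp [hΔa, this]
      · simp
    · apply Finset.sum_eq_zero
      intro b _
      have : (j : ℕ) ≠ (b : ℕ) + 1 := by omega
      simp [hΔa, this]
  have hHΔT : ∀ j k : Fin n, (H * Δᵀ) j k =
      if hk : 1 ≤ (k : ℕ) then H j ⟨(k : ℕ) - 1, by omega⟩ else 0 := by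
    intro j k
    rw [Matrix.mul_apply]
    split_ifs with hk
    · rw [Finset.sum_eq_single (⟨(k : ℕ) - 1, by omega⟩ : Fin n)]
      · rw [Matrix.transpose_apply, hΔa]; simp; omega
      · intro b _ hb
        have : (k : ℕ) ≠ (b : ℕ) + 1 := by
          intro hc
          apply hb; apply Fin.ext; simp; omega
        simp [Matrix.transpose_apply, hΔa, hΔTa, this]
      · simp
    · apply Finset.sum_eq_zero
      intro b _
      have : (k : ℕ) ≠ (b : ℕ) + 1 := by omega
      simp [Matrix.transpose_apply, hΔa, hΔTa, this]
  -- first displacement: Δ H⁻¹ − H⁻¹ Δᵀ = H⁻¹ (H Δ − Δᵀ H) H⁻¹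
  have key1 : Δ * H⁻¹ - H⁻¹ * Δᵀ = H⁻¹ * (H * Δ - Δᵀ * H) * H⁻¹ := by
    rw [Matrix.mul_sub, Matrix.sub_mul, ← Matrix.mul_assoc, ← Matrix.mul_assoc, h1,
      Matrix.mul_assoc, Matrix.mul_assoc, h2]
    simp [Matrix.mul_assoc]
  have key2 : Δᵀ * H⁻¹ - H⁻¹ * Δ = H⁻¹ * (H * Δᵀ - Δ * H) * H⁻¹ := by
    rw [Matrix.mul_sub, Matrix.sub_mul, ← Matrix.mul_assoc, ← Matrix.mul_assoc, h1,
      Matrix.mul_assoc, Matrix.mul_assoc, h2]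
    simp [Matrix.mul_assoc]
  have hr1 : (H * Δ - Δᵀ * H).rank ≤ 2 := by
    apply rank_le_two_of_support _ (⟨n - 1, by omega⟩ : Fin n) ⟨n - 1, by omega⟩
    intro j k hj hk
    have hvj : (j : ℕ) ≠ n - 1 := by simpa using Fin.val_ne_of_ne hj
    have hvk : (k : ℕ) ≠ n - 1 := by simpa using Fin.val_ne_of_ne hk
    have hj' : (j : ℕ) + 1 < n := by have := j.isLt; omega
    have hk' : (k : ℕ) + 1 < n := by have := k.isLt; omega
    simp only [Matrix.sub_apply, hΔH, hHΔ, dif_pos hj', dif_pos hk']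
    rw [hH, hH, sub_eq_zero]
    congr 1
    simp only [Fin.val_mk]
    omega
  have hr2 : (H * Δᵀ - Δ * H).rank ≤ 2 := by
    apply rank_le_two_of_support _ (⟨0, by omega⟩ : Fin n) ⟨0, by omega⟩
    intro j k hj hk
    have hj' : 1 ≤ (j : ℕ) := by
      have := Fin.val_ne_of_ne hj; simp at this; omega
    have hk' : 1 ≤ (k : ℕ) := by
      have := Fin.val_ne_of_ne hk; simp at this; omega
    simp only [Matrix.sub_apply, hHΔT, hΔHT, dif_pos hj', dif_pos hk']
    rw [hH, hH, sub_eq_zero]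
    congr 1
    simp only [Fin.val_mk]
    omega
  constructor
  · rw [key1]
    calc (H⁻¹ * (H * Δ - Δᵀ * H) * H⁻¹).rank
        ≤ (H⁻¹ * (H * Δ - Δᵀ * H)).rank := Matrix.rank_mul_le_left _ _
      _ ≤ (H * Δ - Δᵀ * H).rank := Matrix.rank_mul_le_right _ _
      _ ≤ 2 := hr1
  · rw [key2]
    calc (H⁻¹ * (H * Δᵀ - Δ * H) * H⁻¹).rank
        ≤ (H⁻¹ * (H * Δᵀ - Δ * H)).rank := Matrix.rank_mul_le_left _ _
      _ ≤ (H * Δᵀ - Δ * H).rank := Matrix.rank_mul_le_right _ _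
      _ ≤ 2 := hr2
end

section
/- Let n ≥ 1, let r ∈ ℕ, and let M ∈ ℝ^{n×n} be symmetric with rank(Δ M − M Δᵀ) ≤ r and rank(Δᵀ M − M Δ) ≤ r, where Δ is the lower shift matrix. Let J be the exchange matrix and set R = (1/2)(M + J M J). Then R is symmetric, R J = J R (R is centrosymmetric, hence bisymmetric), and both rank(Δ R − R Δᵀ) ≤ 2r and rank(Δᵀ R − R Δ) ≤ 2r. -/
open Matrix

/-- The exchange (backward identity) matrix `J`, with ones on the antidiagonal. -/
def exchangeMatrix (R : Type*) [Zero R] [One R] (n : ℕ) : Matrix (Fin n) (Fin n) R :=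
  Matrix.of fun j k => if (j : ℕ) + (k : ℕ) + 1 = n then 1 else 0

lemma matrix_rank_add_le {n : ℕ} (A B : Matrix (Fin n) (Fin n) ℝ) :
    (A + B).rank ≤ A.rank + B.rank := by
  simp only [Matrix.rank]
  have h : LinearMap.range (A + B).mulVecLin
      ≤ LinearMap.range A.mulVecLin ⊔ LinearMap.range B.mulVecLin := by
    rintro x ⟨v, rfl⟩
    exact Submodule.mem_sup.2 ⟨A.mulVecLin v, ⟨v, rfl⟩, B.mulVecLin v, ⟨v, rfl⟩, by
      simp [Matrix.mulVecLin, Matrix.add_mulVec]⟩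
  calc _ ≤ _ := Submodule.finrank_mono h
    _ ≤ _ := Submodule.finrank_add_le_finrank_add_finrank _ _

lemma matrix_rank_smul_le {n : ℕ} (c : ℝ) (A : Matrix (Fin n) (Fin n) ℝ) :
    (c • A).rank ≤ A.rank := by
  have : c • A = (c • (1 : Matrix (Fin n) (Fin n) ℝ)) * A := by simp [Matrix.smul_mul]
  rw [this]; exact Matrix.rank_mul_le_right _ _

lemma exJ_transpose (n : ℕ) : (exchangeMatrix ℝ n)ᵀ = exchangeMatrix ℝ n := by
  ext j k
  simp only [exchangeMatrix, Matrix.transpose_apply, Matrix.of_apply]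
  split_ifs with h₁ h₂ <;> first | rfl | (exfalso; omega)

lemma exJ_mul_self (n : ℕ) (hn : 1 ≤ n) : exchangeMatrix ℝ n * exchangeMatrix ℝ n = 1 := by
  ext j k
  have hj := j.isLt; have hk := k.isLt
  rw [Matrix.mul_apply, Matrix.one_apply]
  have hl : (n - 1 - (j:ℕ)) < n := by omega
  rw [Finset.sum_eq_single (⟨n - 1 - (j:ℕ), hl⟩ : Fin n)]
  · simp only [exchangeMatrix, Matrix.of_apply, Fin.ext_iff]
    split_ifs <;> first | ring1 | (exfalso; omega)
  · intro l _ hne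
    have hne' : (l : ℕ) ≠ n - 1 - (j:ℕ) := fun h => hne (by simp [Fin.ext_iff, h])
    have hll := l.isLt
    simp only [exchangeMatrix, Matrix.of_apply]
    split_ifs with h₁ h₂ <;> first | ring1 | (exfalso; omega)
  · intro h; exact absurd (Finset.mem_univ _) h

lemma shift_mul_exJ (n : ℕ) (hn : 1 ≤ n) :
    shiftMatrix ℝ n * exchangeMatrix ℝ n = exchangeMatrix ℝ n * (shiftMatrix ℝ n)ᵀ := by
  ext j k
  have hj := j.isLt; have hk := k.isLt
  rw [Matrix.mul_apply, Matrix.mul_apply]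
  have e1 : ∑ l, shiftMatrix ℝ n j l * exchangeMatrix ℝ n l k
      = (if (j:ℕ) + (k:ℕ) = n then 1 else 0 : ℝ) := by
    have hl : (n - 1 - (k:ℕ)) < n := by omega
    rw [Finset.sum_eq_single (⟨n - 1 - (k:ℕ), hl⟩ : Fin n)]
    · simp only [shiftMatrix, exchangeMatrix, Matrix.of_apply]
      split_ifs <;> first | ring1 | (exfalso; omega)
    · intro l _ hne
      have hne' : (l : ℕ) ≠ n - 1 - (k:ℕ) := fun h => hne (by simp [Fin.ext_iff, h])
      have hll := l.isLt
      simp only [shiftMatrix, exchangeMatrix, Matrix.of_apply]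
      split_ifs with h₁ h₂ <;> first | ring1 | (exfalso; omega)
    · intro h; exact absurd (Finset.mem_univ _) h
  have e2 : ∑ l, exchangeMatrix ℝ n j l * (shiftMatrix ℝ n)ᵀ l k
      = (if (j:ℕ) + (k:ℕ) = n then 1 else 0 : ℝ) := by
    have hl : (n - 1 - (j:ℕ)) < n := by omega
    rw [Finset.sum_eq_single (⟨n - 1 - (j:ℕ), hl⟩ : Fin n)]
    · simp only [shiftMatrix, exchangeMatrix, Matrix.transpose_apply, Matrix.of_apply]
      split_ifs <;> first | ring1 | (exfalso; omega)
    · intro l _ hne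
      have hne' : (l : ℕ) ≠ n - 1 - (j:ℕ) := fun h => hne (by simp [Fin.ext_iff, h])
      have hll := l.isLt
      simp only [shiftMatrix, exchangeMatrix, Matrix.transpose_apply, Matrix.of_apply]
      split_ifs with h₁ h₂ <;> first | ring1 | (exfalso; omega)
    · intro h; exact absurd (Finset.mem_univ _) h
  rw [e1, e2]

/-- Folding a symmetric matrix of Sylvester displacement rank `≤ r`:
`R = (1/2)(M + J M J)` is bisymmetric and has Sylvester displacement rank
at most `2r` with respect to `(Δ, Δᵀ)` and `(Δᵀ, Δ)`. -/
theorem fold_real_part_bisymmetric_displacement (n : ℕ) (hn : 1 ≤ n) (r : ℕ)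
    (M : Matrix (Fin n) (Fin n) ℝ) (hsym : Mᵀ = M)
    (h1 : (shiftMatrix ℝ n * M - M * (shiftMatrix ℝ n)ᵀ).rank ≤ r)
    (h2 : ((shiftMatrix ℝ n)ᵀ * M - M * shiftMatrix ℝ n).rank ≤ r) :
    let J := exchangeMatrix ℝ n
    let R := (1 / 2 : ℝ) • (M + J * M * J)
    Rᵀ = R ∧ R * J = J * R ∧
    (shiftMatrix ℝ n * R - R * (shiftMatrix ℝ n)ᵀ).rank ≤ 2 * r ∧
    ((shiftMatrix ℝ n)ᵀ * R - R * shiftMatrix ℝ n).rank ≤ 2 * r := by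
  intro J R
  set Δ := shiftMatrix ℝ n with hΔ
  have hJt : Jᵀ = J := exJ_transpose n
  have hJJ : J * J = 1 := exJ_mul_self n hn
  have hΔJ : Δ * J = J * Δᵀ := shift_mul_exJ n hn
  have hconj : J * Δ * J = Δᵀ := by
    rw [Matrix.mul_assoc, hΔJ, ← Matrix.mul_assoc, hJJ, Matrix.one_mul]
  have hJΔ : J * Δ = Δᵀ * J := by
    rw [← hconj, Matrix.mul_assoc (J * Δ) J J, hJJ, Matrix.mul_one]
  -- symmetry
  have hRsym : Rᵀ = R := by
    show ((1 / 2 : ℝ) • (M + J * M * J))ᵀ = (1 / 2 : ℝ) • (M + J * M * J)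
    rw [Matrix.transpose_smul, Matrix.transpose_add, Matrix.transpose_mul,
      Matrix.transpose_mul, hJt, hsym, Matrix.mul_assoc]
  -- centrosymmetry
  have hRJ : R * J = J * R := by
    show ((1 / 2 : ℝ) • (M + J * M * J)) * J = J * ((1 / 2 : ℝ) • (M + J * M * J))
    rw [Matrix.smul_mul, Matrix.mul_smul]
    congr 1
    rw [Matrix.add_mul, Matrix.mul_add]
    have : J * M * J * J = J * M := by
      rw [Matrix.mul_assoc, hJJ, Matrix.mul_one]
    rw [this]
    have : J * (J * M * J) = M * J := by
      rw [← Matrix.mul_assoc, ← Matrix.mul_assoc, hJJ, Matrix.one_mul]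
    rw [this, add_comm]
  -- displacement identities
  have key1 : Δ * R - R * Δᵀ
      = (1 / 2 : ℝ) • (Δ * M - M * Δᵀ) + (1 / 2 : ℝ) • (J * (Δᵀ * M - M * Δ) * J) := by
    show Δ * ((1 / 2 : ℝ) • (M + J * M * J)) - ((1 / 2 : ℝ) • (M + J * M * J)) * Δᵀ = _
    rw [Matrix.mul_smul, Matrix.smul_mul, ← smul_sub, ← smul_add]
    congr 1
    have e1 : Δ * (J * M * J) = J * (Δᵀ * M) * J := by
      rw [← Matrix.mul_assoc Δ (J * M) J, ← Matrix.mul_assoc Δ J M, hΔJ,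
        Matrix.mul_assoc J Δᵀ M]
    have e2 : (J * M * J) * Δᵀ = J * (M * Δ) * J := by
      rw [Matrix.mul_assoc (J * M) J Δᵀ, ← hΔJ, ← Matrix.mul_assoc (J * M) Δ J,
        Matrix.mul_assoc J M Δ]
    rw [Matrix.mul_add, Matrix.add_mul, e1, e2, Matrix.mul_sub, Matrix.sub_mul]
    abel
  have key2 : Δᵀ * R - R * Δ
      = (1 / 2 : ℝ) • (Δᵀ * M - M * Δ) + (1 / 2 : ℝ) • (J * (Δ * M - M * Δᵀ) * J) := by
    show Δᵀ * ((1 / 2 : ℝ) • (M + J * M * J)) - ((1 / 2 : ℝ) • (M + J * M * J)) * Δ = _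
    rw [Matrix.mul_smul, Matrix.smul_mul, ← smul_sub, ← smul_add]
    congr 1
    have e1 : Δᵀ * (J * M * J) = J * (Δ * M) * J := by
      rw [← Matrix.mul_assoc Δᵀ (J * M) J, ← Matrix.mul_assoc Δᵀ J M, ← hJΔ,
        Matrix.mul_assoc J Δ M]
    have e2 : (J * M * J) * Δ = J * (M * Δᵀ) * J := by
      rw [Matrix.mul_assoc (J * M) J Δ, hJΔ, ← Matrix.mul_assoc (J * M) Δᵀ J,
        Matrix.mul_assoc J M Δᵀ]
    rw [Matrix.mul_add, Matrix.add_mul, e1, e2, Matrix.mul_sub, Matrix.sub_mul]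
    abel
  refine ⟨hRsym, hRJ, ?_, ?_⟩
  · rw [key1]
    calc ((1 / 2 : ℝ) • (Δ * M - M * Δᵀ) + (1 / 2 : ℝ) • (J * (Δᵀ * M - M * Δ) * J)).rank
        ≤ ((1 / 2 : ℝ) • (Δ * M - M * Δᵀ)).rank
          + ((1 / 2 : ℝ) • (J * (Δᵀ * M - M * Δ) * J)).rank := matrix_rank_add_le _ _
      _ ≤ (Δ * M - M * Δᵀ).rank + (J * (Δᵀ * M - M * Δ) * J).rank := by
          exact Nat.add_le_add (matrix_rank_smul_le _ _) (matrix_rank_smul_le _ _)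
      _ ≤ r + r := by
          refine Nat.add_le_add h1 (le_trans ?_ h2)
          calc (J * (Δᵀ * M - M * Δ) * J).rank
              ≤ (J * (Δᵀ * M - M * Δ)).rank := Matrix.rank_mul_le_left _ _
            _ ≤ (Δᵀ * M - M * Δ).rank := Matrix.rank_mul_le_right _ _
      _ = 2 * r := by ring
  · rw [key2]
    calc ((1 / 2 : ℝ) • (Δᵀ * M - M * Δ) + (1 / 2 : ℝ) • (J * (Δ * M - M * Δᵀ) * J)).rank
        ≤ ((1 / 2 : ℝ) • (Δᵀ * M - M * Δ)).rank
          + ((1 / 2 : ℝ) • (J * (Δ * M - M * Δᵀ) * J)).rank := matrix_rank_add_le _ _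
      _ ≤ (Δᵀ * M - M * Δ).rank + (J * (Δ * M - M * Δᵀ) * J).rank := by
          exact Nat.add_le_add (matrix_rank_smul_le _ _) (matrix_rank_smul_le _ _)
      _ ≤ r + r := by
          refine Nat.add_le_add h2 (le_trans ?_ h1)
          calc (J * (Δ * M - M * Δᵀ) * J).rank
              ≤ (J * (Δ * M - M * Δᵀ)).rank := Matrix.rank_mul_le_left _ _
            _ ≤ (Δ * M - M * Δᵀ).rank := Matrix.rank_mul_le_right _ _
      _ = 2 * r := by ring
end

section
/- Let n ≥ 1, let r ∈ ℕ, and let M ∈ ℝ^{n×n} be symmetric with rank(Δ M − M Δᵀ) ≤ r and rank(Δᵀ M − M Δ) ≤ r, where Δ is the lower shift matrix. Let J be the exchange matrix and set N = M J − J M. Then: (i) Nᵀ = −N, so that i·N is a Hermitian complex matrix; (ii) N J = J Nᵀ (N is persymmetric); (iii) all diagonal entries of N are zero; and (iv) rank(N − Δ N Δᵀ) ≤ 2r + 2. -/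
open Matrix

/-! Because `J` is a symmetric involution with `Δ J = J Δᵀ`, conjugation by `Δ` passes through
the fold: `N - Δ N Δᵀ = (M - Δ M Δ) J - J (M - Δᵀ M Δᵀ)`. Each bracket is a Sylvester displacement
of `M` up to a rank-one correction, e.g. `M - Δ M Δ = (1 - Δ Δᵀ) M + Δ (Δᵀ M - M Δ)`, where
`1 - Δ Δᵀ` projects onto the first coordinate and `1 - Δᵀ Δ = J (1 - Δ Δᵀ) J` onto the last.
The remaining claims follow from `Mᵀ = M`, `Jᵀ = J` and `J J = 1`. -/

namespace Matrix

variable {K m n : Type*} [Field K] [Fintype n]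

theorem rank_add_le (A B : Matrix m n K) : (A + B).rank ≤ A.rank + B.rank := by
  rw [rank, rank, rank, mulVecLin_add]
  exact (Submodule.finrank_mono (LinearMap.range_add_le _ _)).trans
    (Submodule.finrank_add_le_finrank_add_finrank _ _)

@[simp]
theorem rank_neg [Fintype m] (A : Matrix m n K) : (-A).rank = A.rank := by
  have h : (-A).mulVecLin = -A.mulVecLin := LinearMap.ext fun v => neg_mulVec v A
  rw [rank, rank, h, LinearMap.range_neg]

theorem rank_sub_le [Fintype m] (A B : Matrix m n K) : (A - B).rank ≤ A.rank + B.rank := by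
  simpa [sub_eq_add_neg] using rank_add_le A (-B)

end Matrix

section ShiftExchange

variable {R : Type*} {n : ℕ}

@[simp]
theorem exchangeMatrix_transpose [Zero R] [One R] :
    (exchangeMatrix R n)ᵀ = exchangeMatrix R n := by
  ext j k
  simp only [transpose_apply, exchangeMatrix, of_apply]
  grind

theorem exchangeMatrix_eq_submatrix_one [Zero R] [One R] :
    exchangeMatrix R n = (1 : Matrix (Fin n) (Fin n) R).submatrix Fin.rev id := by
  ext j k
  simp only [exchangeMatrix, of_apply, submatrix_apply, id, one_apply, Fin.ext_iff, Fin.val_rev]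
  grind

theorem exchangeMatrix_mul [NonAssocSemiring R] {m : Type*} (X : Matrix (Fin n) m R) :
    exchangeMatrix R n * X = X.submatrix Fin.rev id := by
  rw [exchangeMatrix_eq_submatrix_one]
  simpa using one_submatrix_mul Fin.rev (Equiv.refl _) X

theorem mul_exchangeMatrix [NonAssocSemiring R] {m : Type*} [Fintype m] (X : Matrix m (Fin n) R) :
    X * exchangeMatrix R n = X.submatrix id Fin.rev := by
  rw [exchangeMatrix_eq_submatrix_one]
  exact mul_submatrix_one Fin.revPerm id X

theorem exchangeMatrix_mul_self [NonAssocSemiring R] :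
    exchangeMatrix R n * exchangeMatrix R n = 1 := by
  rw [exchangeMatrix_mul, exchangeMatrix_eq_submatrix_one, submatrix_submatrix,
    Fin.rev_involutive.comp_self, Function.comp_id, submatrix_id_id]

theorem shiftMatrix_mul_exchangeMatrix [NonAssocSemiring R] :
    shiftMatrix R n * exchangeMatrix R n = exchangeMatrix R n * (shiftMatrix R n)ᵀ := by
  rw [mul_exchangeMatrix, exchangeMatrix_mul]
  ext j k
  simp only [submatrix_apply, id, shiftMatrix, of_apply, transpose_apply, Fin.val_rev]
  grind

theorem shiftMatrix_mul_transpose_apply [NonAssocSemiring R] (j k : Fin n) :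
    (shiftMatrix R n * (shiftMatrix R n)ᵀ) j k = if j = k ∧ (j : ℕ) ≠ 0 then 1 else 0 := by
  rw [mul_apply]
  rcases Nat.eq_zero_or_pos (j : ℕ) with hj | hj
  · simp [shiftMatrix, hj]
  · rw [Fintype.sum_eq_single ⟨j - 1, by omega⟩ fun l hl => ?_]
    · simp only [shiftMatrix, transpose_apply, of_apply, Fin.ext_iff]
      rw [Nat.sub_add_cancel hj, if_pos rfl, one_mul]
      exact if_congr (by omega) rfl rfl
    · have : (j : ℕ) ≠ l + 1 := fun h => hl (Fin.ext (by simp; omega))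
      simp [shiftMatrix, this]

theorem one_sub_shiftMatrix_mul_transpose [Ring R] :
    (1 : Matrix (Fin n) (Fin n) R) - shiftMatrix R n * (shiftMatrix R n)ᵀ =
      vecMulVec (fun i : Fin n => if (i : ℕ) = 0 then (1 : R) else 0)
        (fun i : Fin n => if (i : ℕ) = 0 then (1 : R) else 0) := by
  ext j k
  rw [Matrix.sub_apply, shiftMatrix_mul_transpose_apply, one_apply, vecMulVec_apply]
  split_ifs <;> simp_all [Fin.ext_iff]

theorem exchangeMatrix_mul_shiftMatrix [Semiring R] :
    exchangeMatrix R n * shiftMatrix R n = (shiftMatrix R n)ᵀ * exchangeMatrix R n := by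
  calc exchangeMatrix R n * shiftMatrix R n
      = exchangeMatrix R n * (shiftMatrix R n * exchangeMatrix R n) * exchangeMatrix R n := by
        rw [mul_assoc, mul_assoc, exchangeMatrix_mul_self, mul_one]
    _ = (shiftMatrix R n)ᵀ * exchangeMatrix R n := by
        rw [shiftMatrix_mul_exchangeMatrix, ← mul_assoc, exchangeMatrix_mul_self, one_mul]

theorem transpose_shiftMatrix_mul_shiftMatrix [Semiring R] :
    (shiftMatrix R n)ᵀ * shiftMatrix R n =
      exchangeMatrix R n * (shiftMatrix R n * (shiftMatrix R n)ᵀ) * exchangeMatrix R n := by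
  calc (shiftMatrix R n)ᵀ * shiftMatrix R n
      = (shiftMatrix R n)ᵀ * exchangeMatrix R n * (exchangeMatrix R n * shiftMatrix R n) := by
        rw [mul_assoc, ← mul_assoc (exchangeMatrix R n), exchangeMatrix_mul_self, one_mul]
    _ = exchangeMatrix R n * shiftMatrix R n * ((shiftMatrix R n)ᵀ * exchangeMatrix R n) := by
        rw [exchangeMatrix_mul_shiftMatrix]
    _ = _ := by simp only [mul_assoc]

end ShiftExchange

section Rank

variable {K : Type*} [Field K] {n : ℕ}

theorem rank_one_sub_shiftMatrix_mul_transpose_le :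
    ((1 : Matrix (Fin n) (Fin n) K) - shiftMatrix K n * (shiftMatrix K n)ᵀ).rank ≤ 1 := by
  rw [one_sub_shiftMatrix_mul_transpose]
  exact rank_vecMulVec_le _ _

theorem rank_one_sub_transpose_mul_shiftMatrix_le :
    ((1 : Matrix (Fin n) (Fin n) K) - (shiftMatrix K n)ᵀ * shiftMatrix K n).rank ≤ 1 := by
  have h : (1 : Matrix (Fin n) (Fin n) K) - (shiftMatrix K n)ᵀ * shiftMatrix K n =
      exchangeMatrix K n * (1 - shiftMatrix K n * (shiftMatrix K n)ᵀ) * exchangeMatrix K n := by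
    rw [transpose_shiftMatrix_mul_shiftMatrix, mul_sub, sub_mul, mul_one, exchangeMatrix_mul_self]
  rw [h]
  exact ((rank_mul_le_left _ _).trans (rank_mul_le_right _ _)).trans
    rank_one_sub_shiftMatrix_mul_transpose_le

end Rank

theorem commutator_sub_conj_eq_of_mul_eq {α : Type*} [Ring α] {a b j : α} (h : a * j = j * b)
    (m : α) :
    (m * j - j * m) - a * (m * j - j * m) * b =
      ((1 - a * b) * m + a * (b * m - m * a)) * j -
        j * ((1 - b * a) * m + b * (a * m - m * b)) := by
  have hdiff : (m * j - j * m) - a * (m * j - j * m) * b -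
      (((1 - a * b) * m + a * (b * m - m * a)) * j - j * ((1 - b * a) * m + b * (a * m - m * b))) =
      a * m * (a * j - j * b) + (a * j - j * b) * m * b := by
    noncomm_ring
  rwa [h, sub_self, mul_zero, zero_mul, zero_mul, add_zero, sub_eq_zero] at hdiff

section Fold

variable {R : Type*} {m : Type*} [Fintype m]

theorem transpose_commutator_of_symm [CommRing R] {M J : Matrix m m R} (hM : Mᵀ = M)
    (hJ : Jᵀ = J) : (M * J - J * M)ᵀ = -(M * J - J * M) := by
  rw [transpose_sub, transpose_mul, transpose_mul, hM, hJ, neg_sub]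

theorem commutator_mul_eq_mul_transpose [CommRing R] [DecidableEq m] {M J : Matrix m m R}
    (hM : Mᵀ = M) (hJ : Jᵀ = J) (hJJ : J * J = 1) :
    (M * J - J * M) * J = J * (M * J - J * M)ᵀ := by
  rw [transpose_commutator_of_symm hM hJ, sub_mul, mul_neg, mul_sub, mul_assoc, hJJ,
    ← mul_assoc J J, hJJ, mul_one, one_mul, neg_sub, mul_assoc]

end Fold

theorem isHermitian_I_smul_map_ofReal {m : Type*} {N : Matrix m m ℝ} (hN : Nᵀ = -N) :
    (Complex.I • N.map (fun x => (x : ℂ))).IsHermitian := by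
  ext j k
  have hjk : N k j = -N j k := by simpa using congrFun (congrFun hN j) k
  simp [hjk]

theorem commutator_exchangeMatrix_apply_self {R : Type*} [CommRing R] {n : ℕ}
    {M : Matrix (Fin n) (Fin n) R} (hM : Mᵀ = M) (j : Fin n) :
    (M * exchangeMatrix R n - exchangeMatrix R n * M) j j = 0 := by
  rw [Matrix.sub_apply, mul_exchangeMatrix, exchangeMatrix_mul, submatrix_apply, submatrix_apply,
    ← transpose_apply M, hM, sub_self]

theorem rank_commutator_exchangeMatrix_sub_shift_conj_le {K : Type*} [Field K] {n r : ℕ}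
    {M : Matrix (Fin n) (Fin n) K}
    (h1 : (shiftMatrix K n * M - M * (shiftMatrix K n)ᵀ).rank ≤ r)
    (h2 : ((shiftMatrix K n)ᵀ * M - M * shiftMatrix K n).rank ≤ r) :
    let N := M * exchangeMatrix K n - exchangeMatrix K n * M
    (N - shiftMatrix K n * N * (shiftMatrix K n)ᵀ).rank ≤ 2 * r + 2 := by
  intro N
  set Δ := shiftMatrix K n
  rw [commutator_sub_conj_eq_of_mul_eq shiftMatrix_mul_exchangeMatrix]
  have hP : ((1 - Δ * Δᵀ) * M + Δ * (Δᵀ * M - M * Δ)).rank ≤ 1 + r :=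
    (rank_add_le _ _).trans <| add_le_add
      ((rank_mul_le_left _ _).trans rank_one_sub_shiftMatrix_mul_transpose_le)
      ((rank_mul_le_right _ _).trans h2)
  have hQ : ((1 - Δᵀ * Δ) * M + Δᵀ * (Δ * M - M * Δᵀ)).rank ≤ 1 + r :=
    (rank_add_le _ _).trans <| add_le_add
      ((rank_mul_le_left _ _).trans rank_one_sub_transpose_mul_shiftMatrix_le)
      ((rank_mul_le_right _ _).trans h1)
  calc _ ≤ _ := rank_sub_le _ _
    _ ≤ _ := add_le_add (rank_mul_le_left _ _) (rank_mul_le_right _ _)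
    _ ≤ 2 * r + 2 := by omega

theorem fold_imag_part_persymmetric_displacement_general (n : ℕ) (r : ℕ)
    (M : Matrix (Fin n) (Fin n) ℝ) (hsym : Mᵀ = M)
    (h1 : (shiftMatrix ℝ n * M - M * (shiftMatrix ℝ n)ᵀ).rank ≤ r)
    (h2 : ((shiftMatrix ℝ n)ᵀ * M - M * shiftMatrix ℝ n).rank ≤ r) :
    let N := M * exchangeMatrix ℝ n - exchangeMatrix ℝ n * M
    Nᵀ = -N ∧
    (Complex.I • (N.map (fun x => (x : ℂ)))).IsHermitian ∧
    N * exchangeMatrix ℝ n = exchangeMatrix ℝ n * Nᵀ ∧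
    (∀ j : Fin n, N j j = 0) ∧
    (N - shiftMatrix ℝ n * N * (shiftMatrix ℝ n)ᵀ).rank ≤ 2 * r + 2 := by
  intro N
  have hskew : Nᵀ = -N := transpose_commutator_of_symm hsym exchangeMatrix_transpose
  exact ⟨hskew, isHermitian_I_smul_map_ofReal hskew,
    commutator_mul_eq_mul_transpose hsym exchangeMatrix_transpose exchangeMatrix_mul_self,
    commutator_exchangeMatrix_apply_self hsym,
    rank_commutator_exchangeMatrix_sub_shift_conj_le h1 h2⟩

/-- Folding a symmetric matrix of Sylvester displacement rank `≤ r`: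
`N = M J − J M` is skew-symmetric (so `i·N` is Hermitian), persymmetric,
has zero diagonal, and Stein displacement rank at most `2r + 2`. -/
theorem fold_imag_part_persymmetric_displacement (n : ℕ) (hn : 1 ≤ n) (r : ℕ)
    (M : Matrix (Fin n) (Fin n) ℝ) (hsym : Mᵀ = M)
    (h1 : (shiftMatrix ℝ n * M - M * (shiftMatrix ℝ n)ᵀ).rank ≤ r)
    (h2 : ((shiftMatrix ℝ n)ᵀ * M - M * shiftMatrix ℝ n).rank ≤ r) :
    let N := M * exchangeMatrix ℝ n - exchangeMatrix ℝ n * M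
    Nᵀ = -N ∧
    (Complex.I • (N.map (fun x => (x : ℂ)))).IsHermitian ∧
    N * exchangeMatrix ℝ n = exchangeMatrix ℝ n * Nᵀ ∧
    (∀ j : Fin n, N j j = 0) ∧
    (N - shiftMatrix ℝ n * N * (shiftMatrix ℝ n)ᵀ).rank ≤ 2 * r + 2 :=
  fold_imag_part_persymmetric_displacement_general n r M hsym h1 h2
end
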